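/- arXiv:1112.2454 — 3 statements merged into one kernel-verified Lean document; each statement's English description precedes it below -/
import Mathlib

section
/- Let (V, φ) be a nondegenerate quadratic space over a field F of characteristic 0, with a hyperbolic pair e, f (i.e., φ[e] = φ[f] = 0, 2φ(e, f) = 1) and Z the orthogonal complement of Fe + Ff. If q ∈ F^× is not represented by φ on Z, then for h = qe + f the orthogonal complement W = (Fh)^⊥ decomposes as W = (Z ⊕ F(f - qe)), and φ is anisotropic on Z ⊕ F(f - qe) provided φ is anisotropic on Z. -/
/-!
Every `x` splits as `x = z + a • e + b • f` with `z ⊥ e, f`, `a = 2φ(f, x)`, `b = 2φ(e, x)`, and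
`x ⊥ q • e + f` says exactly `a = -q b`, i.e. `x ∈ Z ⊕ F(f - q • e)`. Since `φ[f - q • e] = -q`,
`φ[z + c • (f - q • e)] = φ[z] - q c²`; a nonzero isotropic vector of this form would have `c ≠ 0`
(by anisotropy of `Z`), and then `c⁻¹ • z ∈ Z` would represent `q`.
-/

namespace LinearMap.BilinForm

section CommRing

variable {R M : Type*} [CommRing R] [AddCommGroup M] [Module R M] {φ : LinearMap.BilinForm R M}
  {e f : M}

theorem mem_orthogonal_span_pair_iff {x : M} :
    x ∈ φ.orthogonal (Submodule.span R {e, f}) ↔ φ e x = 0 ∧ φ f x = 0 := by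
  have : x ∈ φ.orthogonal (Submodule.span R {e, f}) ↔
      Submodule.span R {e, f} ≤ LinearMap.ker (φ.flip x) :=
    mem_orthogonal_iff.trans ⟨fun h n hn ↦ h n hn, fun h n hn ↦ h hn⟩
  rw [this, Submodule.span_le, Set.insert_subset_iff, Set.singleton_subset_iff]
  rfl

theorem apply_eq_zero_of_mem_orthogonal {N : Submodule R M} {x y : M}
    (hx : x ∈ φ.orthogonal N) (hy : y ∈ N) : φ y x = 0 :=
  mem_orthogonal_iff.mp hx y hy

theorem apply_add_smul_add_smul (hφ : φ.IsSymm) {x y : M} (hxy : φ x y = 0) (c : R) :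
    φ (x + c • y) (x + c • y) = φ x x + c ^ 2 * φ y y := by
  have hyx : φ y x = 0 := hφ.eq x y ▸ hxy
  simp only [map_add, map_smul, LinearMap.add_apply, LinearMap.smul_apply, smul_eq_mul,
    hxy, hyx]
  ring

/-- The orthogonal projection onto the complement of the hyperbolic plane `Re + Rf`. -/
theorem sub_smul_sub_smul_mem_orthogonal_span_pair (hφ : φ.IsSymm) (he : φ e e = 0)
    (hf : φ f f = 0) (hef : 2 * φ e f = 1) (x : M) :
    x - (2 * φ f x) • e - (2 * φ e x) • f ∈ φ.orthogonal (Submodule.span R {e, f}) := by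
  have hfe : φ f e = φ e f := hφ.eq f e
  rw [mem_orthogonal_span_pair_iff]
  constructor
  · simp only [map_sub, map_smul, smul_eq_mul]
    linear_combination -(2 * φ f x) * he - φ e x * hef
  · simp only [map_sub, map_smul, smul_eq_mul]
    linear_combination -(2 * φ e x) * hf - φ f x * hef - (2 * φ f x) * hfe

theorem apply_sub_smul_sub_smul (hφ : φ.IsSymm) (he : φ e e = 0) (hf : φ f f = 0)
    (hef : 2 * φ e f = 1) (q : R) : φ (f - q • e) (f - q • e) = -q := by
  have hfe : φ f e = φ e f := hφ.eq f e
  simp only [map_sub, map_smul, LinearMap.sub_apply, LinearMap.smul_apply, smul_eq_mul]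
  linear_combination hf + q ^ 2 * he - q * hfe - q * hef

theorem ker_flip_smul_add_eq (hφ : φ.IsSymm) (he : φ e e = 0) (hf : φ f f = 0)
    (hef : 2 * φ e f = 1) (q : R) :
    LinearMap.ker (φ.flip (q • e + f)) =
      φ.orthogonal (Submodule.span R {e, f}) ⊔ Submodule.span R {f - q • e} := by
  have hfe : φ f e = φ e f := hφ.eq f e
  apply le_antisymm
  · intro x hx
    replace hx : q * φ e x + φ f x = 0 := by
      simpa [hφ.eq x] using hx
    have hdecomp : x = (x - (2 * φ f x) • e - (2 * φ e x) • f) + (2 * φ e x) • (f - q • e) := by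
      linear_combination (norm := module) (2 : R) • hx • e
    rw [hdecomp]
    exact Submodule.add_mem_sup (sub_smul_sub_smul_mem_orthogonal_span_pair hφ he hf hef x)
      (Submodule.smul_mem _ _ (Submodule.mem_span_singleton_self _))
  · refine sup_le (fun z hz ↦ ?_) ((Submodule.span_singleton_le_iff_mem _ _).mpr ?_)
    · have hh : q • e + f ∈ Submodule.span R {e, f} :=
        add_mem (Submodule.smul_mem _ _ (Submodule.subset_span (by simp)))
          (Submodule.subset_span (by simp))
      rw [LinearMap.mem_ker, flip_apply, hφ.eq]
      exact apply_eq_zero_of_mem_orthogonal hz hh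
    · simp only [LinearMap.mem_ker, flip_apply, map_sub, map_add, map_smul,
        LinearMap.add_apply, LinearMap.smul_apply, smul_eq_mul]
      linear_combination q * hfe + hf - q ^ 2 * he

end CommRing

theorem anisotropic_sup_span_singleton {K V : Type*} [Field K] [AddCommGroup V] [Module K V]
    {φ : LinearMap.BilinForm K V} (hφ : φ.IsSymm) {Z : Submodule K V} {w : V}
    (hZw : ∀ z ∈ Z, φ z w = 0) (hZ : ∀ z ∈ Z, z ≠ 0 → φ z z ≠ 0)
    (hw : ∀ z ∈ Z, φ z z ≠ -φ w w) :
    ∀ x ∈ Z ⊔ Submodule.span K {w}, x ≠ 0 → φ x x ≠ 0 := by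
  intro x hx hx0 hxx
  obtain ⟨z, hz, y, hy, rfl⟩ := Submodule.mem_sup.mp hx
  obtain ⟨c, rfl⟩ := Submodule.mem_span_singleton.mp hy
  rw [apply_add_smul_add_smul hφ (hZw z hz)] at hxx
  by_cases hc : c = 0
  · subst hc
    rw [zero_smul, add_zero] at hx0
    exact hZ z hz hx0 (by simpa using hxx)
  · -- `φ[z] = -c² φ[w]`, so `c⁻¹ • z` represents `-φ[w]`
    refine hw (c⁻¹ • z) (Z.smul_mem _ hz) ?_
    simp only [map_smul, LinearMap.smul_apply, smul_eq_mul]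
    field_simp
    linear_combination hxx

end LinearMap.BilinForm

open LinearMap.BilinForm in
theorem orth_complement_of_hyperbolic_vector_general
    {F V : Type*} [Field F] [AddCommGroup V] [Module F V]
    (φ : LinearMap.BilinForm F V) (hsym : ∀ x y, φ x y = φ y x)
    (e f : V) (he : φ e e = 0) (hf : φ f f = 0) (hef : 2 * φ e f = 1)
    (Z : Submodule F V)
    (hZ : Z = φ.orthogonal (Submodule.span F {e, f}))
    (q : F)
    (hqZ : ∀ z ∈ Z, φ z z ≠ q)
    (hZan : ∀ z ∈ Z, z ≠ 0 → φ z z ≠ 0) :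
    LinearMap.ker (φ.flip (q • e + f)) = Z ⊔ Submodule.span F {f - q • e} ∧
    (∀ x ∈ Z ⊔ Submodule.span F {f - q • e}, x ≠ 0 → φ x x ≠ 0) := by
  have hφ : φ.IsSymm := ⟨hsym⟩
  subst hZ
  refine ⟨ker_flip_smul_add_eq hφ he hf hef q, anisotropic_sup_span_singleton hφ ?_ hZan ?_⟩
  · intro z hz
    have hw : f - q • e ∈ Submodule.span F {e, f} :=
      sub_mem (Submodule.subset_span (by simp))
        (Submodule.smul_mem _ _ (Submodule.subset_span (by simp)))
    rw [hsym]
    exact apply_eq_zero_of_mem_orthogonal hz hw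
  · rwa [apply_sub_smul_sub_smul hφ he hf hef, neg_neg]

/-- Let `(V, φ)` be a nondegenerate quadratic space over a field `F` of
characteristic 0, with a hyperbolic pair `e, f` (`φ[e] = φ[f] = 0`,
`2φ(e,f) = 1`) and `Z` the orthogonal complement of `Fe + Ff`. If
`q ∈ F^×` is not represented by `φ` on `Z`, then for `h = q•e + f` the
orthogonal complement `W = (Fh)^⊥` equals `Z ⊕ F(f - q•e)`, and `φ` is
anisotropic on `Z ⊕ F(f - q•e)` provided `φ` is anisotropic on `Z`. -/
theorem orth_complement_of_hyperbolic_vector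
    {F V : Type*} [Field F] [CharZero F] [AddCommGroup V] [Module F V]
    [FiniteDimensional F V]
    (φ : LinearMap.BilinForm F V) (hsym : ∀ x y, φ x y = φ y x)
    (hnd : ∀ x : V, (∀ y : V, φ x y = 0) → x = 0)
    (e f : V) (he : φ e e = 0) (hf : φ f f = 0) (hef : 2 * φ e f = 1)
    (Z : Submodule F V)
    (hZ : Z = φ.orthogonal (Submodule.span F {e, f}))
    (q : F) (hq0 : q ≠ 0)
    (hqZ : ∀ z ∈ Z, φ z z ≠ q)
    (hZan : ∀ z ∈ Z, z ≠ 0 → φ z z ≠ 0) :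
    LinearMap.ker (φ.flip (q • e + f)) = Z ⊔ Submodule.span F {f - q • e} ∧
    (∀ x ∈ Z ⊔ Submodule.span F {f - q • e}, x ≠ 0 → φ x x ≠ 0) :=
  orth_complement_of_hyperbolic_vector_general φ hsym e f he hf hef Z hZ q hqZ hZan
end

section
/- Let F be a nonarchimedean local field, L = 𝔬e + 𝔬f the maximal lattice in the hyperbolic plane V = Fe + Ff (with φ[e] = φ[f] = 0, 2φ(e,f) = 1), and h = qπ^{-m}e + π^m f where q ∈ 𝔬 has valuation ν ≥ 0 and 0 ≤ m ≤ ⌊ν/2⌋. Then the orthogonal complement W = (Fh)^⊥ equals Fg with g = π^m f - qπ^{-m}e, L ∩ W = 𝔬π^{-m}g, M = 𝔬π^{-⌊ν/2⌋}g is an 𝔬-maximal lattice in W, and [M / (L ∩ W)] = 𝔭^{⌊ν/2⌋ - m}. -/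
/-
`W` is a line, so everything reduces to two facts about a lattice `𝔬v` in a line. It is
`𝔬`-maximal as soon as `φ[v]` has valuation at most `1`, because `μ²φ[v] ∈ 𝔬` then forces
`μ ∈ 𝔬`. And every `α` with `𝔬vα ⊆ 𝔬cv` is multiplication by an element of `c𝔬`, so
`[𝔬v/𝔬cv] = c𝔬`. In the hyperbolic plane, `g₀ = π^{-m}g = f - qπ^{-2m}e` is primitive in `L`,
`v = π^{-⌊ν/2⌋}g` has `φ[v] = -qπ^{-2⌊ν/2⌋}` of valuation `ν - 2⌊ν/2⌋ ≤ 1`, and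
`g₀ = π^{⌊ν/2⌋-m}v`.
-/

section Defs

variable (𝔬 : Type*) [CommRing 𝔬] (F : Type*) [Field F] [Algebra 𝔬 F]
variable (V : Type*) [AddCommGroup V] [Module F V] [Module 𝔬 V] [IsScalarTower 𝔬 F V]

/-- `L` is an `𝔬`-lattice in the `F`-vector space `V`: a finitely generated
`𝔬`-submodule containing an `F`-basis of `V`. -/
def IsLattice (L : Submodule 𝔬 V) : Prop :=
  L.FG ∧ Submodule.span F (L : Set V) = ⊤

/-- The `𝔬`-ideal `[M/L]` of `F`, generated by `det α` over all `F`-linear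
automorphisms `α` of `V` with `Mα ⊆ L`. -/
def latticeIndex (M L : Submodule 𝔬 V) : Submodule 𝔬 F :=
  Submodule.span 𝔬 {c : F | ∃ α : V ≃ₗ[F] V,
    c = LinearMap.det (α : V →ₗ[F] V) ∧ ∀ x ∈ M, α x ∈ L}

/-- The dual lattice `L̃ = {x ∈ V ∣ 2φ(x, L) ⊆ 𝔬}`. -/
def dualLattice (φ : LinearMap.BilinForm F V) (L : Submodule 𝔬 V) : Submodule 𝔬 V where
  carrier := {x : V | ∀ y ∈ L, 2 * φ x y ∈ (algebraMap 𝔬 F).range}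
  zero_mem' := by
    intro y hy
    exact ⟨0, by simp⟩
  add_mem' := by
    intro a b ha hb y hy
    obtain ⟨u, hu⟩ := ha y hy
    obtain ⟨v, hv⟩ := hb y hy
    refine ⟨u + v, ?_⟩
    rw [map_add, hu, hv, map_add, LinearMap.add_apply]
    ring
  smul_mem' := by
    intro c x hx y hy
    obtain ⟨u, hu⟩ := hx y hy
    refine ⟨c * u, ?_⟩
    have h1 : (c • x : V) = (algebraMap 𝔬 F c) • x := (algebraMap_smul F c x).symm
    rw [map_mul, hu, h1, map_smul, LinearMap.smul_apply, smul_eq_mul]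
    ring

/-- An `𝔬`-maximal lattice with respect to `φ`: maximal among the lattices `N`
with `φ[N] ⊆ 𝔬`. -/
def IsMaximalLattice (φ : LinearMap.BilinForm F V) (L : Submodule 𝔬 V) : Prop :=
  IsLattice 𝔬 F V L ∧ (∀ x ∈ L, φ x x ∈ (algebraMap 𝔬 F).range) ∧
    ∀ L' : Submodule 𝔬 V, IsLattice 𝔬 F V L' →
      (∀ x ∈ L', φ x x ∈ (algebraMap 𝔬 F).range) → L ≤ L' → L' = L

end Defs

open Submodule

theorem Submodule.comap_subtype_span_singleton (S : Type*) {R M : Type*} [Semiring S] [Semiring R]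
    [AddCommMonoid M] [Module R M] [Module S M] [SMul S R] [IsScalarTower S R M]
    {p : Submodule R M} {x : M} (hx : x ∈ p) :
    (span S {x}).comap (p.subtype.restrictScalars S) = span S {(⟨x, hx⟩ : p)} := by
  ext y
  simp [mem_span_singleton, Subtype.ext_iff]

theorem Submodule.span_singleton_mk_eq_top {R M : Type*} [Semiring R] [AddCommMonoid M]
    [Module R M] {p : Submodule R M} {x : M} (hp : span R {x} = p) :
    span R {(⟨x, hp ▸ mem_span_singleton_self x⟩ : p)} = ⊤ := by
  rw [← comap_subtype_span_singleton R, hp]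
  exact comap_subtype_self p

theorem Module.Basis.span_pair_eq_top {R M : Type*} [Semiring R] [AddCommMonoid M] [Module R M]
    (b : Module.Basis (Fin 2) R M) : span R {b 0, b 1} = ⊤ := by
  rw [← b.span_eq]
  congr
  ext
  simp [Fin.exists_fin_two, eq_comm]

theorem LinearMap.det_eq_of_span_singleton_eq_top {K X : Type*} [Field K] [AddCommGroup X]
    [Module K X] {v : X} (hv : span K {v} = ⊤) (hv0 : v ≠ 0) {α : X →ₗ[K] X} {c : K}
    (hα : α v = c • v) : LinearMap.det α = c := by
  have : Module.Finite K X := Module.Finite.of_fg_top (hv ▸ fg_span_singleton v)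
  have hrank : Module.finrank K X = 1 := by
    rw [← finrank_top, ← hv, finrank_span_singleton hv0]
  have hαc : α = c • LinearMap.id := LinearMap.ext_on hv (by simpa using hα)
  rw [hαc, LinearMap.det_smul, LinearMap.det_id, hrank, pow_one, mul_one]

namespace IsDiscreteValuationRing

variable {𝔬 : Type*} [CommRing 𝔬] [IsDomain 𝔬] [IsDiscreteValuationRing 𝔬] {π : 𝔬}

theorem dvd_of_sq_dvd_sq_mul_pow (hπ : Irreducible π) {r s : 𝔬} {t : ℕ} (ht : t ≤ 1)
    (h : s ^ 2 ∣ r ^ 2 * π ^ t) : s ∣ r := by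
  rw [← addVal_le_iff_dvd] at h ⊢
  rw [addVal_mul, addVal_pow, addVal_pow, addVal_pow, addVal_uniformizer hπ, nsmul_one,
    nsmul_eq_mul, nsmul_eq_mul] at h
  generalize addVal 𝔬 r = n, addVal 𝔬 s = k at h ⊢
  induction n using ENat.recTopCoe with
  | top => exact le_top
  | coe n =>
    induction k using ENat.recTopCoe with
    | top => exact absurd h (by norm_cast)
    | coe k =>
      norm_cast at h ⊢
      omega

theorem mem_range_of_sq_mul_mem_range {F : Type*} [Field F] [Algebra 𝔬 F]
    [IsFractionRing 𝔬 F] (hπ : Irreducible π) {t : ℕ} (ht : t ≤ 1) (u : 𝔬ˣ) {μ : F}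
    (hμ : μ ^ 2 * algebraMap 𝔬 F (π ^ t * u) ∈ (algebraMap 𝔬 F).range) :
    μ ∈ (algebraMap 𝔬 F).range := by
  obtain ⟨d, hd⟩ := hμ
  obtain ⟨r, s, hs, rfl⟩ := IsFractionRing.div_surjective (A := 𝔬) μ
  have hs0 : algebraMap 𝔬 F s ≠ 0 := IsFractionRing.to_map_ne_zero_of_mem_nonZeroDivisors hs
  have hcleared : d * s ^ 2 = r ^ 2 * π ^ t * u := by
    apply IsFractionRing.injective 𝔬 F
    simp only [map_mul, map_pow, hd]
    field_simp
  obtain ⟨k, rfl⟩ : s ∣ r := dvd_of_sq_dvd_sq_mul_pow hπ ht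
    ⟨d * ↑u⁻¹, by linear_combination (-(↑u⁻¹ : 𝔬)) * hcleared - r ^ 2 * π ^ t * u.mul_inv⟩
  exact ⟨k, by rw [map_mul, mul_div_cancel_left₀ _ hs0]⟩

end IsDiscreteValuationRing

section LatticesInALine

variable {𝔬 F X : Type*} [CommRing 𝔬] [Field F] [Algebra 𝔬 F] [AddCommGroup X] [Module F X]
  [Module 𝔬 X] [IsScalarTower 𝔬 F X]

theorem latticeIndex_span_singleton_smul {v : X} (hv : span F {v} = ⊤) (hv0 : v ≠ 0) {c : F}
    (hc : c ≠ 0) : latticeIndex 𝔬 F X (span 𝔬 {v}) (span 𝔬 {c • v}) = span 𝔬 {c} := by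
  apply le_antisymm
  · rw [latticeIndex, span_le]
    rintro _ ⟨α, rfl, hα⟩
    obtain ⟨t, ht⟩ := mem_span_singleton.mp (hα v (mem_span_singleton_self v))
    rw [SetLike.mem_coe, mem_span_singleton]
    exact ⟨t, (LinearMap.det_eq_of_span_singleton_eq_top hv hv0
      (by rw [LinearEquiv.coe_coe, ← ht, smul_assoc])).symm⟩
  · rw [span_singleton_le_iff_mem, latticeIndex]
    refine subset_span ⟨LinearEquiv.smulOfNeZero F X c hc,
      (LinearMap.det_eq_of_span_singleton_eq_top hv hv0 rfl).symm, fun x hx => ?_⟩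
    obtain ⟨t, rfl⟩ := mem_span_singleton.mp hx
    exact mem_span_singleton.mpr ⟨t, smul_comm t c v⟩

theorem isMaximalLattice_span_singleton [IsDomain 𝔬] [IsDiscreteValuationRing 𝔬]
    [IsFractionRing 𝔬 F] {π : 𝔬} (hπ : Irreducible π) (ψ : LinearMap.BilinForm F X) {v : X}
    (hv : span F {v} = ⊤) {t : ℕ} (ht : t ≤ 1) (u : 𝔬ˣ)
    (hψ : ψ v v = algebraMap 𝔬 F (π ^ t * u)) :
    IsMaximalLattice 𝔬 F X ψ (span 𝔬 {v}) := by
  have hψμ (μ : F) : ψ (μ • v) (μ • v) = μ ^ 2 * algebraMap 𝔬 F (π ^ t * u) := by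
    simp only [map_smul, LinearMap.smul_apply, smul_eq_mul, hψ]
    ring
  refine ⟨⟨fg_span_singleton v, by rw [span_span_of_tower, hv]⟩, fun x hx => ?_,
    fun N _ hN hvN => le_antisymm (fun x hx => ?_) hvN⟩
  · obtain ⟨r, rfl⟩ := mem_span_singleton.mp hx
    rw [← algebraMap_smul F r v, hψμ]
    exact ⟨r ^ 2 * (π ^ t * u), by rw [map_mul, map_pow]⟩
  · obtain ⟨μ, rfl⟩ := mem_span_singleton.mp (hv ▸ mem_top : x ∈ span F {v})
    obtain ⟨r, rfl⟩ := IsDiscreteValuationRing.mem_range_of_sq_mul_mem_range hπ ht u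
      (hψμ μ ▸ hN _ hx)
    exact mem_span_singleton.mpr ⟨r, (algebraMap_smul F r v).symm⟩

end LatticesInALine

section LinesInASpace

variable {𝔬 F V : Type*} [CommRing 𝔬] [Field F] [Algebra 𝔬 F] [AddCommGroup V] [Module F V]
  [Module 𝔬 V] [IsScalarTower 𝔬 F V] {W : Submodule F V} {w : V}

theorem latticeIndex_comap_subtype_span_singleton (hW : span F {w} = W) (hw0 : w ≠ 0) {c : F}
    (hc : c ≠ 0) :
    latticeIndex 𝔬 F W ((span 𝔬 {w}).comap (W.subtype.restrictScalars 𝔬))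
      ((span 𝔬 {c • w}).comap (W.subtype.restrictScalars 𝔬)) = span 𝔬 {c} := by
  have hw : w ∈ W := hW ▸ mem_span_singleton_self w
  rw [comap_subtype_span_singleton 𝔬 hw, comap_subtype_span_singleton 𝔬 (W.smul_mem c hw)]
  exact latticeIndex_span_singleton_smul (span_singleton_mk_eq_top hW) (by simpa using hw0) hc

theorem isMaximalLattice_comap_subtype_span_singleton [IsDomain 𝔬] [IsDiscreteValuationRing 𝔬]
    [IsFractionRing 𝔬 F] {π : 𝔬} (hπ : Irreducible π) (φ : LinearMap.BilinForm F V)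
    (hW : span F {w} = W) {t : ℕ} (ht : t ≤ 1) (u : 𝔬ˣ)
    (hφ : φ w w = algebraMap 𝔬 F (π ^ t * u)) :
    IsMaximalLattice 𝔬 F W (φ.restrict W) ((span 𝔬 {w}).comap (W.subtype.restrictScalars 𝔬)) := by
  rw [comap_subtype_span_singleton 𝔬 (hW ▸ mem_span_singleton_self w)]
  exact isMaximalLattice_span_singleton hπ _ (span_singleton_mk_eq_top hW) ht u hφ

end LinesInASpace

section HyperbolicPlane

variable {F V : Type*} [Field F] [AddCommGroup V] [Module F V]

theorem two_mul_apply_smul_add_smul_of_hyperbolic {φ : LinearMap.BilinForm F V} {e f : V}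
    (hee : φ e e = 0) (hff : φ f f = 0) (hef : 2 * φ e f = 1) (hfe : 2 * φ f e = 1)
    (s t s' t' : F) : 2 * φ (s • e + t • f) (s' • e + t' • f) = s * t' + t * s' := by
  simp only [map_add, map_smul, LinearMap.add_apply, LinearMap.smul_apply, smul_eq_mul, hee, hff]
  linear_combination (s * t') * hef + (t * s') * hfe

theorem apply_smul_add_smul_self_of_hyperbolic {φ : LinearMap.BilinForm F V} {e f : V}
    (hee : φ e e = 0) (hff : φ f f = 0) (hef : 2 * φ e f = 1) (hfe : 2 * φ f e = 1)
    (x y : F) : φ (x • e + y • f) (x • e + y • f) = x * y := by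
  rw [← mul_right_inj' (left_ne_zero_of_mul_eq_one hef),
    two_mul_apply_smul_add_smul_of_hyperbolic hee hff hef hfe]
  ring

theorem ker_flip_eq_span_singleton_of_hyperbolic {φ : LinearMap.BilinForm F V} {e f : V}
    (hspan : span F {e, f} = ⊤) (hee : φ e e = 0) (hff : φ f f = 0) (hef : 2 * φ e f = 1)
    (hfe : 2 * φ f e = 1) (a : F) {p : F} (hp : p ≠ 0) :
    LinearMap.ker (φ.flip (a • e + p • f)) = span F {p • f - a • e} := by
  have hφ := two_mul_apply_smul_add_smul_of_hyperbolic hee hff hef hfe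
  ext x
  obtain ⟨s, t, rfl⟩ := mem_span_pair.mp (hspan ▸ mem_top : x ∈ span F {e, f})
  rw [LinearMap.mem_ker, LinearMap.BilinForm.flip_apply,
    ← mul_right_inj' (left_ne_zero_of_mul_eq_one hef), mul_zero, mem_span_singleton]
  constructor
  · intro h
    rw [hφ] at h
    refine ⟨t / p, ?_⟩
    match_scalars
    · field_simp
    · field_simp
      linear_combination -h
  · rintro ⟨μ, hμ⟩
    rw [← hμ, show μ • (p • f - a • e) = (-(μ * a)) • e + (μ * p) • f by module, hφ]
    ring

theorem span_pair_inf_span_singleton_sub_smul {𝔬 : Type*} [CommRing 𝔬] [Algebra 𝔬 F]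
    [Module 𝔬 V] [IsScalarTower 𝔬 F V] {e f : V} (ℓ : V →ₗ[F] F) (hℓe : ℓ e = 0)
    (hℓf : ℓ f = 1) (c : 𝔬) :
    span 𝔬 {e, f} ⊓ (span F {f - c • e}).restrictScalars 𝔬 = span 𝔬 {f - c • e} := by
  refine le_antisymm (fun x hx => ?_) ?_
  · obtain ⟨⟨s, t, rfl⟩, hx⟩ := And.imp_left mem_span_pair.mp (mem_inf.mp hx)
    obtain ⟨μ, hμ⟩ := mem_span_singleton.mp hx
    have : μ = algebraMap 𝔬 F t := by
      simpa [hℓe, hℓf, ← algebraMap_smul F] using congr(ℓ $hμ)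
    rw [← hμ, this, algebraMap_smul]
    exact smul_mem _ _ (mem_span_singleton_self _)
  · rw [span_singleton_le_iff_mem]
    exact mem_inf.mpr ⟨sub_mem (subset_span (by simp)) (smul_mem _ _ (subset_span (by simp))),
      mem_span_singleton_self _⟩

end HyperbolicPlane

/-- The hyperbolic-plane computation: with `L = 𝔬e + 𝔬f`,
`h = qπ^{-m}e + π^m f` (`q` of valuation `ν`, `0 ≤ m ≤ ⌊ν/2⌋`), one has
`W = (Fh)^⊥ = Fg` for `g = π^m f - qπ^{-m} e`, `L ∩ W = 𝔬π^{-m}g`,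
`M = 𝔬π^{-⌊ν/2⌋}g` is an `𝔬`-maximal lattice in `W`, and
`[M/(L ∩ W)] = 𝔭^{⌊ν/2⌋ - m}`. -/
theorem hyperbolic_plane_latticeIndex
    {𝔬 : Type*} [CommRing 𝔬] [IsDomain 𝔬] [IsDiscreteValuationRing 𝔬]
    {F : Type*} [Field F] [Algebra 𝔬 F] [IsFractionRing 𝔬 F]
    {V : Type*} [AddCommGroup V] [Module F V] [Module 𝔬 V] [IsScalarTower 𝔬 F V]
    (π : 𝔬) (hπ : Irreducible π)
    (b : Module.Basis (Fin 2) F V) (e f : V) (he : e = b 0) (hf : f = b 1)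
    (φ : LinearMap.BilinForm F V) (hsym : ∀ x y, φ x y = φ y x)
    (hee : φ e e = 0) (hff : φ f f = 0) (hef : 2 * φ e f = 1)
    (L : Submodule 𝔬 V) (hL : L = Submodule.span 𝔬 {e, f})
    (q : 𝔬) (ν : ℕ) (hq : ∃ u : 𝔬ˣ, q = π ^ ν * ↑u)
    (m : ℕ) (hm : m ≤ ν / 2)
    (h g : V)
    (hh : h = (algebraMap 𝔬 F q * (algebraMap 𝔬 F π)⁻¹ ^ m) • e +
      ((algebraMap 𝔬 F π) ^ m) • f)
    (hg : g = ((algebraMap 𝔬 F π) ^ m) • f -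
      (algebraMap 𝔬 F q * (algebraMap 𝔬 F π)⁻¹ ^ m) • e)
    (W : Submodule F V) (hW : W = LinearMap.ker (φ.flip h))
    (M : Submodule 𝔬 V)
    (hM : M = Submodule.span 𝔬 {((algebraMap 𝔬 F π)⁻¹ ^ (ν / 2)) • g}) :
    W = Submodule.span F {g} ∧
    L ⊓ W.restrictScalars 𝔬 = Submodule.span 𝔬 {((algebraMap 𝔬 F π)⁻¹ ^ m) • g} ∧
    IsMaximalLattice 𝔬 F ↥W (φ.restrict W)
      (M.comap ((W.subtype).restrictScalars 𝔬)) ∧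
    latticeIndex 𝔬 F ↥W
      (M.comap ((W.subtype).restrictScalars 𝔬))
      ((L ⊓ W.restrictScalars 𝔬).comap ((W.subtype).restrictScalars 𝔬)) =
      Submodule.span 𝔬 {algebraMap 𝔬 F (π ^ (ν / 2 - m))} := by
  obtain ⟨u, rfl⟩ := hq
  obtain ⟨k, t, ht, rfl, hk⟩ : ∃ k t, t ≤ 1 ∧ ν = 2 * k + t ∧ ν / 2 = k :=
    ⟨ν / 2, ν % 2, by omega, by omega, rfl⟩
  rw [hk] at hm hM ⊢
  obtain ⟨j, rfl⟩ := Nat.exists_eq_add_of_le hm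
  subst he hf hL hM
  rw [map_mul, map_pow] at hh hg
  set ϖ := algebraMap 𝔬 F π
  have hϖ : ϖ ≠ 0 := IsFractionRing.to_map_ne_zero_of_mem_nonZeroDivisors
    (mem_nonZeroDivisors_of_ne_zero hπ.ne_zero)
  have hfe : 2 * φ (b 1) (b 0) = 1 := hsym (b 0) (b 1) ▸ hef
  have hgg₀ : g = ϖ ^ m • (b 1 - (π ^ (2 * j + t) * u) • b 0) := by
    rw [hg, ← algebraMap_smul F (π ^ (2 * j + t) * u : 𝔬), map_mul, map_pow]
    match_scalars
    · rfl
    · rw [inv_pow]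
      field_simp
      ring
  set g₀ := b 1 - (π ^ (2 * j + t) * u) • b 0
  have hWg : W = span F {g} := hW ▸ hh ▸ hg ▸ ker_flip_eq_span_singleton_of_hyperbolic
    b.span_pair_eq_top hee hff hef hfe _ (pow_ne_zero m hϖ)
  have hg₀ : ϖ⁻¹ ^ m • g = g₀ := by rw [hgg₀, inv_pow, inv_smul_smul₀ (pow_ne_zero m hϖ)]
  have hspan_g : span F {g} = span F {g₀} := by
    rw [← hg₀, span_singleton_smul_eq (IsUnit.mk0 _ (pow_ne_zero m (inv_ne_zero hϖ)))]
  have hLW : span 𝔬 {b 0, b 1} ⊓ W.restrictScalars 𝔬 = span 𝔬 {ϖ⁻¹ ^ m • g} := by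
    rw [hWg, hspan_g, hg₀]
    exact span_pair_inf_span_singleton_sub_smul (b.coord 1) (by simp) (by simp) _
  set v := ϖ⁻¹ ^ j • g₀
  have hv : ϖ⁻¹ ^ (m + j) • g = v := by
    rw [pow_add, mul_comm, ← smul_smul, hg₀]
  have hg₀v : g₀ = ϖ ^ j • v := by simp only [v, inv_pow, smul_inv_smul₀ (pow_ne_zero j hϖ)]
  have hvW : span F {v} = W := by
    rw [span_singleton_smul_eq (IsUnit.mk0 _ (pow_ne_zero j (inv_ne_zero hϖ))), hWg, hspan_g]
  have hφg₀ : φ g₀ g₀ = -algebraMap 𝔬 F (π ^ (2 * j + t) * u) := by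
    have := apply_smul_add_smul_self_of_hyperbolic hee hff hef hfe
      (-algebraMap 𝔬 F (π ^ (2 * j + t) * u)) 1
    rwa [one_smul, mul_one, neg_smul, neg_add_eq_sub, algebraMap_smul] at this
  have hφv : φ v v = algebraMap 𝔬 F (π ^ t * ↑(-u)) := by
    simp only [v, map_smul, LinearMap.smul_apply, smul_eq_mul, hφg₀, map_mul, map_pow,
      Units.val_neg, map_neg, inv_pow]
    field_simp
    ring
  have hv0 : v ≠ 0 := by
    intro h0
    simp [h0, hπ.ne_zero] at hφv
  refine ⟨hWg, hLW, ?_, ?_⟩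
  · rw [hv]
    exact isMaximalLattice_comap_subtype_span_singleton hπ φ hvW ht (-u) hφv
  · rw [hv, hLW, hg₀, hg₀v, latticeIndex_comap_subtype_span_singleton hvW hv0 (pow_ne_zero j hϖ),
      map_pow, Nat.add_sub_cancel_left]
end

section
/- Let F be a nonarchimedean local field, (V, φ) nondegenerate with Witt data: Z an anisotropic subspace, e, f a hyperbolic pair orthogonal to Z, so V = Z ⊕ (Fe + Ff). Fix z ∈ Z with φ[z] = q ≠ 0, m ≥ 0, and h = z + π^m e. Then W = (Fh)^⊥ = (Z ∩ (Fz)^⊥) ⊕ (Fe + Ff₀) is a Witt decomposition of W, where f₀ = f - (π^{2m}/(4q))e - (π^m/(2q))z; in particular φ[e] = φ[f₀] = 0 and 2φ(e, f₀) = 1. -/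
/-!
Because `f₀ ≡ f` modulo `Z + Fe`, every vector of `V` lies in `Z + span {e, f₀}`. Both `e`
and `f₀` are orthogonal to `h` (this and `φ[f₀] = 0` fix the two coefficients of `f₀`), so
the modular law gives `(Fh)^⊥ = (Z ∩ (Fh)^⊥) + span {e, f₀}`, and `Z ∩ (Fh)^⊥ = Z ∩ (Fz)^⊥`
because `Z ⊥ e`. Pairing with `e` and then with `f` shows that `Z ∩ span {e, f₀} = 0`.
-/

open Submodule LinearMap

namespace LinearMap.BilinForm

variable {F V : Type*} [Field F] [AddCommGroup V] [Module F V] {φ : LinearMap.BilinForm F V}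

theorem inf_ker_flip_add_smul {Z : Submodule F V} {e : V} (hZe : ∀ x ∈ Z, φ x e = 0)
    (z : V) (c : F) : Z ⊓ ker (φ.flip (z + c • e)) = Z ⊓ ker (φ.flip z) := by
  ext x
  simp only [mem_inf, mem_ker, flip_apply, map_add, map_smul]
  exact and_congr_right fun hx => by simp [hZe x hx]

theorem disjoint_span_pair_of_apply {Z : Submodule F V} {e f g : V}
    (hZe : ∀ x ∈ Z, φ x e = 0) (hZf : ∀ x ∈ Z, φ x f = 0)
    (hee : φ e e = 0) (hge : φ g e ≠ 0) (hef : φ e f ≠ 0) :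
    Disjoint Z (span F {e, g}) := by
  rw [disjoint_iff_inf_le]
  rintro w ⟨hwZ, hw⟩
  obtain ⟨a, b, rfl⟩ := mem_span_pair.mp hw
  have hb : b * φ g e = 0 := by
    simpa [hee] using hZe _ hwZ
  obtain rfl : b = 0 := (mul_eq_zero.mp hb).resolve_right hge
  have ha : a * φ e f = 0 := by
    simpa using hZf _ hwZ
  obtain rfl : a = 0 := (mul_eq_zero.mp ha).resolve_right hef
  simp

end LinearMap.BilinForm

namespace WittPartner

variable {F V : Type*} [Field F] [AddCommGroup V] [Module F V] {φ : LinearMap.BilinForm F V}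
  {e f z f₀ : V} {q c : F}

theorem two_mul_apply_e (hee : φ e e = 0) (hez : φ e z = 0) (hef : 2 * φ e f = 1)
    (hf₀ : f₀ = f - (c ^ 2 / (4 * q)) • e - (c / (2 * q)) • z) :
    2 * φ e f₀ = 1 := by
  simpa [hf₀, hee, hez] using hef

theorem apply_self_eq_zero (hsym : ∀ x y, φ x y = φ y x) (hee : φ e e = 0) (hff : φ f f = 0)
    (hef : 2 * φ e f = 1) (hze : φ z e = 0) (hzf : φ z f = 0) (hq : φ z z = q) (hq0 : q ≠ 0)
    (hf₀ : f₀ = f - (c ^ 2 / (4 * q)) • e - (c / (2 * q)) • z) :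
    φ f₀ f₀ = 0 := by
  have h2 : (2 : F) ≠ 0 := left_ne_zero_of_mul_eq_one hef
  subst hf₀
  simp only [map_sub, map_smul, LinearMap.sub_apply, LinearMap.smul_apply, smul_eq_mul, hee,
    hff, hze, hzf, hq, hsym f e, hsym e z, hsym f z, eq_inv_of_mul_eq_one_right hef,
    show (4 : F) = 2 * 2 by norm_num]
  field_simp
  ring

theorem apply_add_smul_eq_zero (hsym : ∀ x y, φ x y = φ y x) (hee : φ e e = 0)
    (hef : 2 * φ e f = 1) (hze : φ z e = 0) (hzf : φ z f = 0) (hq : φ z z = q) (hq0 : q ≠ 0)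
    (hf₀ : f₀ = f - (c ^ 2 / (4 * q)) • e - (c / (2 * q)) • z) :
    φ f₀ (z + c • e) = 0 := by
  have h2 : (2 : F) ≠ 0 := left_ne_zero_of_mul_eq_one hef
  subst hf₀
  simp only [map_sub, map_add, map_smul, LinearMap.sub_apply, LinearMap.smul_apply,
    smul_eq_mul, hee, hze, hzf, hq, hsym f e, hsym e z, hsym f z]
  field_simp
  linear_combination c * q * hef

theorem sup_span_eq_top {Z : Submodule F V} (hz : z ∈ Z) (hV : Z ⊔ span F {e, f} = ⊤)
    (hf₀ : f₀ = f - (c ^ 2 / (4 * q)) • e - (c / (2 * q)) • z) :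
    Z ⊔ span F {e, f₀} = ⊤ := by
  refine eq_top_iff.mpr (hV ▸ sup_le le_sup_left (span_le.mpr ?_))
  rintro v (rfl | rfl)
  · exact mem_sup_right (subset_span (by simp))
  · have hsplit : v = (c / (2 * q)) • z + ((c ^ 2 / (4 * q)) • e + f₀) := by
      rw [hf₀]; module
    rw [hsplit]
    exact add_mem (mem_sup_left (smul_mem _ _ hz))
      (mem_sup_right (add_mem (smul_mem _ _ (subset_span (by simp))) (subset_span (by simp))))

end WittPartner

theorem witt_decomposition_of_orth_complement_general
    {𝔬 : Type*} [CommRing 𝔬]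
    {F : Type*} [Field F] [Algebra 𝔬 F]
    {V : Type*} [AddCommGroup V] [Module F V]
    (π : 𝔬)
    (φ : LinearMap.BilinForm F V) (hsym : ∀ x y, φ x y = φ y x)
    (Z : Submodule F V)
    (e f : V)
    (hZe : ∀ x ∈ Z, φ x e = 0) (hZf : ∀ x ∈ Z, φ x f = 0)
    (hee : φ e e = 0) (hff : φ f f = 0) (hef : 2 * φ e f = 1)
    (hV : Z ⊔ Submodule.span F {e, f} = ⊤)
    (z : V) (hz : z ∈ Z) (q : F) (hq : φ z z = q) (hq0 : q ≠ 0)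
    (m : ℕ)
    (h f₀ : V)
    (hh : h = z + ((algebraMap 𝔬 F π) ^ m) • e)
    (hf₀ : f₀ = f - ((algebraMap 𝔬 F π) ^ (2 * m) / (4 * q)) • e -
      ((algebraMap 𝔬 F π) ^ m / (2 * q)) • z) :
    LinearMap.ker (φ.flip h) =
      (Z ⊓ LinearMap.ker (φ.flip z)) ⊔ Submodule.span F {e, f₀} ∧
    (Z ⊓ LinearMap.ker (φ.flip z)) ⊓ Submodule.span F {e, f₀} = ⊥ ∧
    φ f₀ f₀ = 0 ∧ 2 * φ e f₀ = 1 := by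
  rw [pow_mul'] at hf₀
  have hze := hZe z hz
  have hzf := hZf z hz
  have hez : φ e z = 0 := (hsym e z).trans hze
  have hef₀ := WittPartner.two_mul_apply_e hee hez hef hf₀
  have hspan : span F {e, f₀} ≤ ker (φ.flip h) := by
    rw [span_le]
    rintro v (rfl | rfl) <;> simp only [SetLike.mem_coe, mem_ker, BilinForm.flip_apply, hh]
    · simp [hez, hee]
    · exact WittPartner.apply_add_smul_eq_zero hsym hee hef hze hzf hq hq0 hf₀
  refine ⟨?_, ?_, WittPartner.apply_self_eq_zero hsym hee hff hef hze hzf hq hq0 hf₀, hef₀⟩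
  · calc ker (φ.flip h) = (span F {e, f₀} ⊔ Z) ⊓ ker (φ.flip h) := by
          rw [sup_comm, WittPartner.sup_span_eq_top hz hV hf₀, top_inf_eq]
      _ = (Z ⊓ ker (φ.flip z)) ⊔ span F {e, f₀} := by
          rw [sup_inf_assoc_of_le _ hspan, sup_comm, hh, BilinForm.inf_ker_flip_add_smul hZe]
  · have hf₀e : φ f₀ e ≠ 0 := hsym e f₀ ▸ right_ne_zero_of_mul_eq_one hef₀
    exact disjoint_iff.mp (Disjoint.mono_left inf_le_left
      (BilinForm.disjoint_span_pair_of_apply hZe hZf hee hf₀e (right_ne_zero_of_mul_eq_one hef)))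

/-- Witt decomposition of the orthogonal complement of `h = z + π^m e`:
`W = (Fh)^⊥ = (Z ∩ (Fz)^⊥) ⊕ (Fe + Ff₀)` with
`f₀ = f - (π^{2m}/(4q))e - (π^m/(2q))z`; in particular `φ[f₀] = 0` and
`2φ(e, f₀) = 1`. -/
theorem witt_decomposition_of_orth_complement
    {𝔬 : Type*} [CommRing 𝔬] [IsDomain 𝔬] [IsDiscreteValuationRing 𝔬]
    {F : Type*} [Field F] [Algebra 𝔬 F] [IsFractionRing 𝔬 F]
    {V : Type*} [AddCommGroup V] [Module F V] [FiniteDimensional F V]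
    (π : 𝔬) (hπ : Irreducible π)
    (φ : LinearMap.BilinForm F V) (hsym : ∀ x y, φ x y = φ y x)
    (hnd : ∀ x : V, (∀ y : V, φ x y = 0) → x = 0)
    (Z : Submodule F V) (hZan : ∀ x ∈ Z, x ≠ 0 → φ x x ≠ 0)
    (e f : V)
    (hZe : ∀ x ∈ Z, φ x e = 0) (hZf : ∀ x ∈ Z, φ x f = 0)
    (hee : φ e e = 0) (hff : φ f f = 0) (hef : 2 * φ e f = 1)
    (hV : Z ⊔ Submodule.span F {e, f} = ⊤)
    (z : V) (hz : z ∈ Z) (q : F) (hq : φ z z = q) (hq0 : q ≠ 0)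
    (m : ℕ)
    (h f₀ : V)
    (hh : h = z + ((algebraMap 𝔬 F π) ^ m) • e)
    (hf₀ : f₀ = f - ((algebraMap 𝔬 F π) ^ (2 * m) / (4 * q)) • e -
      ((algebraMap 𝔬 F π) ^ m / (2 * q)) • z) :
    LinearMap.ker (φ.flip h) =
      (Z ⊓ LinearMap.ker (φ.flip z)) ⊔ Submodule.span F {e, f₀} ∧
    (Z ⊓ LinearMap.ker (φ.flip z)) ⊓ Submodule.span F {e, f₀} = ⊥ ∧
    φ f₀ f₀ = 0 ∧ 2 * φ e f₀ = 1 :=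
  witt_decomposition_of_orth_complement_general π φ hsym Z e f hZe hZf hee hff hef hV z hz q hq hq0
    m h f₀ hh hf₀
end
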